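/- arXiv:2308.01746 — 2 statements merged into one kernel-verified Lean document; each statement's English description precedes it below -/
import Mathlib

section
/- Let e_1,...,e_K ∈ ℝ^d be a simplex ETF. For any feature vector m with ‖m‖ ≤ 1 and class index k, define the cross-entropy loss L(m) = -log( exp(e_k^T m) / ∑_{j=1}^K exp(e_j^T m) ). Then L(m) ≥ L(e_k), with equality iff m = e_k. That is, m = e_k is the unique global minimizer of the CE loss under fixed ETF prototypes on the unit ball. -/
open scoped RealInnerProductSpace

open Finset Real

/-!
Since the Gram matrix of a simplex ETF has zero row sums, `∑ j, e j = 0`, so for any `m` the scores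
`⟪e j, m⟫` with `j ≠ k` add up to `-t`, where `t = ⟪e k, m⟫`. Jensen's inequality for `exp` over
these `K - 1` scores bounds the loss below by `φ t = log (exp t + (K - 1) exp (-t / (K - 1))) - t`,
with equality at `m = e k`. As `φ` is strictly decreasing and `t ≤ 1` on the unit ball, with
`t = 1` only at `m = e k`, the claim follows.
-/

theorem card_mul_exp_sum_div_card_le_sum_exp {ι : Type*} {s : Finset ι} (hs : s.Nonempty)
    (x : ι → ℝ) : #s * exp ((∑ i ∈ s, x i) / #s) ≤ ∑ i ∈ s, exp (x i) := by
  have hcard : (0 : ℝ) < #s := by exact_mod_cast hs.card_pos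
  have hw : ∑ _i ∈ s, (#s : ℝ)⁻¹ = 1 := by simp [hcard.ne']
  have := convexOn_exp.map_sum_le (fun _ _ => inv_nonneg.2 hcard.le) hw
    (fun i _ => Set.mem_univ (x i))
  simp only [smul_eq_mul, ← mul_sum] at this
  rwa [inv_mul_eq_div, le_inv_mul_iff₀ hcard] at this

theorem strictAnti_log_exp_add_mul_exp_neg_div_sub {c : ℝ} (hc : 0 < c) :
    StrictAnti fun s => log (exp s + c * exp (-s / c)) - s := by
  have hrewrite : ∀ s, log (exp s + c * exp (-s / c)) - s = log (1 + c * exp (-(s / c + s))) := by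
    intro s
    have hsplit : exp s + c * exp (-s / c) = exp s * (1 + c * exp (-(s / c + s))) := by
      rw [mul_add, mul_one, mul_left_comm, ← exp_add]; ring_nf
    rw [hsplit, log_mul (exp_ne_zero s) (by positivity), log_exp]
    ring
  intro s t hst
  simp only [hrewrite]
  gcongr

theorem log_exp_add_mul_exp_neg_div_le_log_sum_exp {ι : Type*} [Fintype ι] [DecidableEq ι]
    (hcard : 1 < Fintype.card ι) (x : ι → ℝ) (hx : ∑ j, x j = 0) (k : ι) :
    log (exp (x k) + ((Fintype.card ι : ℝ) - 1) * exp (-x k / ((Fintype.card ι : ℝ) - 1))) ≤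
      log (∑ j, exp (x j)) := by
  have hrest : ∑ j ∈ univ.erase k, x j = -x k := by
    rw [← add_sum_erase _ _ (mem_univ k)] at hx
    linarith
  have hcard_erase : (#(univ.erase k) : ℝ) = (Fintype.card ι : ℝ) - 1 := by
    rw [card_erase_of_mem (mem_univ k), card_univ, Nat.cast_sub hcard.le, Nat.cast_one]
  have hne : (univ.erase k).Nonempty := by
    rw [← card_pos, card_erase_of_mem (mem_univ k), card_univ]
    omega
  have hjensen := card_mul_exp_sum_div_card_le_sum_exp hne x
  rw [hrest] at hjensen
  rw [← hcard_erase, ← add_sum_erase _ _ (mem_univ k)]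
  gcongr

theorem neg_log_exp_div_sum_exp {ι : Type*} [Fintype ι] (x : ι → ℝ) (k : ι) :
    -log (exp (x k) / ∑ j, exp (x j)) = log (∑ j, exp (x j)) - x k := by
  have hpos : 0 < ∑ j, exp (x j) := sum_pos (fun j _ => exp_pos (x j)) ⟨k, mem_univ k⟩
  rw [log_div (exp_ne_zero _) hpos.ne', log_exp, neg_sub]

theorem inner_lt_one_of_norm_le_one {E : Type*} [NormedAddCommGroup E] [InnerProductSpace ℝ E]
    {u m : E} (hu : ‖u‖ = 1) (hm : ‖m‖ ≤ 1) (hne : m ≠ u) : ⟪u, m⟫ < 1 := by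
  have hle : ⟪u, m⟫ ≤ ‖m‖ := by simpa [hu] using real_inner_le_norm u m
  refine (hle.trans hm).lt_of_ne fun heq => hne ?_
  have hm1 : ‖m‖ = 1 := le_antisymm hm (heq ▸ hle)
  exact ((inner_eq_one_iff_of_norm_eq_one hu hm1).1 heq).symm

structure IsSimplexETF {E ι : Type*} [NormedAddCommGroup E] [InnerProductSpace ℝ E] [Fintype ι]
    (e : ι → E) : Prop where
  norm_eq_one : ∀ i, ‖e i‖ = 1
  inner_eq : ∀ i j, i ≠ j → ⟪e i, e j⟫ = -1 / ((Fintype.card ι : ℝ) - 1)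

namespace IsSimplexETF

variable {E ι : Type*} [NormedAddCommGroup E] [InnerProductSpace ℝ E] [Fintype ι]
  {e : ι → E} (he : IsSimplexETF e)
include he

theorem sum_comp_inner [DecidableEq ι] (f : ℝ → ℝ) (k : ι) :
    ∑ j, f ⟪e j, e k⟫ =
      f 1 + ((Fintype.card ι : ℝ) - 1) * f (-1 / ((Fintype.card ι : ℝ) - 1)) := by
  rw [← add_sum_erase _ _ (mem_univ k), real_inner_self_eq_norm_sq, he.norm_eq_one, one_pow,
    sum_congr rfl fun j hj => by rw [he.inner_eq j k (ne_of_mem_erase hj)], sum_const,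
    card_erase_of_mem (mem_univ k), card_univ, nsmul_eq_mul,
    Nat.cast_sub (Fintype.card_pos_iff.2 ⟨k⟩)]
  simp

theorem sum_eq_zero (hcard : 1 < Fintype.card ι) : ∑ i, e i = 0 := by
  classical
  have hc : (Fintype.card ι : ℝ) - 1 ≠ 0 := sub_ne_zero.2 (by exact_mod_cast hcard.ne')
  refine inner_self_eq_zero (𝕜 := ℝ).1 ?_
  rw [inner_sum]
  refine Finset.sum_eq_zero fun j _ => ?_
  rw [sum_inner, ← Fintype.sum_congr _ _ fun i => id_eq _, he.sum_comp_inner id j, id, id,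
    mul_div_cancel₀ _ hc, add_neg_cancel]

theorem log_exp_add_mul_exp_neg_div_le_log_sum_exp_inner (hcard : 1 < Fintype.card ι) (k : ι)
    (m : E) :
    log (exp ⟪e k, m⟫ +
        ((Fintype.card ι : ℝ) - 1) * exp (-⟪e k, m⟫ / ((Fintype.card ι : ℝ) - 1))) ≤
      log (∑ j, exp ⟪e j, m⟫) := by
  classical
  refine log_exp_add_mul_exp_neg_div_le_log_sum_exp hcard (fun j => ⟪e j, m⟫) ?_ k
  rw [← sum_inner, he.sum_eq_zero hcard, inner_zero_left]

end IsSimplexETF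

theorem ce_unique_minimizer_etf_general (d K : ℕ) (hK : 2 ≤ K)
    (e : Fin K → EuclideanSpace ℝ (Fin d))
    (hnorm : ∀ k, ‖e k‖ = 1)
    (hangle : ∀ i j : Fin K, i ≠ j → ⟪e i, e j⟫ = -1 / ((K : ℝ) - 1))
    (k : Fin K)
    (L : EuclideanSpace ℝ (Fin d) → ℝ)
    (hL : ∀ m, L m = -Real.log (Real.exp ⟪e k, m⟫ / ∑ j, Real.exp ⟪e j, m⟫)) :
    ∀ m : EuclideanSpace ℝ (Fin d), ‖m‖ ≤ 1 →
      L (e k) ≤ L m ∧ (L m = L (e k) ↔ m = e k) := by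
  have hcard : 1 < Fintype.card (Fin K) := by rw [Fintype.card_fin]; omega
  have he : IsSimplexETF e := ⟨hnorm, by rwa [Fintype.card_fin]⟩
  set c : ℝ := (Fintype.card (Fin K) : ℝ) - 1
  set φ : ℝ → ℝ := fun s => log (exp s + c * exp (-s / c)) - s
  have hφ : StrictAnti φ :=
    strictAnti_log_exp_add_mul_exp_neg_div_sub (sub_pos.2 (by exact_mod_cast hcard))
  have hlower : ∀ m, φ ⟪e k, m⟫ ≤ L m := fun m => by
    rw [hL, neg_log_exp_div_sum_exp (fun j => ⟪e j, m⟫)]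
    exact sub_le_sub_right (he.log_exp_add_mul_exp_neg_div_le_log_sum_exp_inner hcard k m) _
  have hmin : L (e k) = φ 1 := by
    rw [hL, neg_log_exp_div_sum_exp (fun j => ⟪e j, e k⟫), he.sum_comp_inner exp k,
      real_inner_self_eq_norm_sq, hnorm, one_pow]
  intro m hm
  have hle : ⟪e k, m⟫ ≤ 1 := (real_inner_le_norm _ _).trans (by rwa [hnorm, one_mul])
  refine ⟨hmin ▸ (hφ.antitone hle).trans (hlower m), fun heq => ?_, fun h => h ▸ rfl⟩
  by_contra hne
  have hlt := hφ (inner_lt_one_of_norm_le_one (hnorm k) hm hne)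
  linarith [hlower m]

/-- With fixed simplex-ETF prototypes, `m = e_k` is the unique global minimizer on the
closed unit ball of the cross-entropy loss
`L(m) = -log( exp(⟪e_k, m⟫) / ∑_j exp(⟪e_j, m⟫) )`. -/
theorem ce_unique_minimizer_etf (d K : ℕ) (hK : 2 ≤ K) (hd : K - 1 ≤ d)
    (e : Fin K → EuclideanSpace ℝ (Fin d))
    (hnorm : ∀ k, ‖e k‖ = 1)
    (hangle : ∀ i j : Fin K, i ≠ j → ⟪e i, e j⟫ = -1 / ((K : ℝ) - 1))
    (k : Fin K)
    (L : EuclideanSpace ℝ (Fin d) → ℝ)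
    (hL : ∀ m, L m = -Real.log (Real.exp ⟪e k, m⟫ / ∑ j, Real.exp ⟪e j, m⟫)) :
    ∀ m : EuclideanSpace ℝ (Fin d), ‖m‖ ≤ 1 →
      L (e k) ≤ L m ∧ (L m = L (e k) ↔ m = e k) :=
  ce_unique_minimizer_etf_general d K hK e hnorm hangle k L hL
end

section
/- Let e_1,...,e_K be a simplex ETF in ℝ^d and let p_j(m) = exp(e_j^T m)/∑_{j'} exp(e_{j'}^T m) be softmax probabilities. If m is a critical point in the interior of the unit ball (‖m‖ < 1) of the CE loss L(m) = -log p_k(m), i.e., ∑_{j≠k} p_j(m)·(e_j - e_k) = 0, then this leads to a contradiction: no interior critical point exists. Formally: for all m with ‖m‖ < 1, ∑_{j≠k} p_j(m)·e_j ≠ (1 - p_k(m))·e_k. -/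
open scoped RealInnerProductSpace

/-- The cross-entropy loss with fixed simplex-ETF prototypes has no critical point in
the interior of the unit ball: for every `m` with `‖m‖ < 1`,
`∑_{j ≠ k} p_j(m) • e_j ≠ (1 - p_k(m)) • e_k`, where `p_j` are the softmax probabilities. -/
theorem ce_no_interior_critical_point (d K : ℕ) (hK : 2 ≤ K)
    (e : Fin K → EuclideanSpace ℝ (Fin d))
    (hnorm : ∀ k, ‖e k‖ = 1)
    (hangle : ∀ i j : Fin K, i ≠ j → ⟪e i, e j⟫ = -1 / ((K : ℝ) - 1))
    (k : Fin K)
    (p : EuclideanSpace ℝ (Fin d) → Fin K → ℝ)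
    (hp : ∀ m j, p m j = Real.exp ⟪e j, m⟫ / ∑ j', Real.exp ⟪e j', m⟫) :
    ∀ m : EuclideanSpace ℝ (Fin d), ‖m‖ < 1 →
      ∑ j ∈ Finset.univ.erase k, p m j • e j ≠ (1 - p m k) • e k := by
  intro m _ h
  -- denominator positive
  have hS : (0 : ℝ) < ∑ j', Real.exp ⟪e j', m⟫ :=
    Finset.sum_pos (fun j _ => Real.exp_pos _)
      ⟨k, Finset.mem_univ k⟩
  -- probabilities sum to 1
  have hsum1 : ∑ j, p m j = 1 := by
    simp only [hp]
    rw [← Finset.sum_div, div_self hS.ne']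
  have hsum_erase : ∑ j ∈ Finset.univ.erase k, p m j = 1 - p m k := by
    have := Finset.add_sum_erase Finset.univ (p m) (Finset.mem_univ k)
    linarith [hsum1, this]
  -- 1 - p m k > 0 : there is j ≠ k with p m j > 0
  obtain ⟨j0, hj0⟩ : ∃ j0 : Fin K, j0 ≠ k := by
    by_contra hc
    push_neg at hc
    have h0 := hc ⟨0, by omega⟩
    have h1 := hc ⟨1, by omega⟩
    rw [← h1] at h0
    have := Fin.val_eq_val (⟨0, by omega⟩ : Fin K) ⟨1, by omega⟩ |>.mpr h0
    simp at this
  have hpos : 0 < 1 - p m k := by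
    rw [← hsum_erase]
    refine Finset.sum_pos (fun j _ => by rw [hp]; positivity) ⟨j0, Finset.mem_erase.mpr ⟨hj0, Finset.mem_univ _⟩⟩
  -- take inner product with e k
  have hinner := congrArg (fun v => ⟪v, e k⟫) h
  simp only [inner_sum, sum_inner, inner_smul_left, RCLike.conj_to_real] at hinner
  have hek : ⟪e k, e k⟫ = (1 : ℝ) := by
    rw [real_inner_self_eq_norm_sq, hnorm]; norm_num
  have hL : ∑ j ∈ Finset.univ.erase k, p m j * ⟪e j, e k⟫
      = (1 - p m k) * (-1 / ((K : ℝ) - 1)) := by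
    rw [← hsum_erase, Finset.sum_mul]
    refine Finset.sum_congr rfl fun j hj => ?_
    rw [hangle j k (Finset.mem_erase.mp hj).1]
  rw [hL, hek, mul_one] at hinner
  have hK1 : (1 : ℝ) < (K : ℝ) := by exact_mod_cast by omega
  have hKne : (K : ℝ) - 1 > 0 := by linarith
  have : (1 - p m k) * (-1 / ((K : ℝ) - 1)) < 1 - p m k := by
    have : -1 / ((K : ℝ) - 1) < 1 := by
      rw [div_lt_one hKne]; linarith
    nlinarith
  linarith [hinner, this]
end
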